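/- arXiv:2112.14760 — 4 statements merged into one kernel-verified Lean document; each statement's English description precedes it below -/
import Mathlib

section
/- Let K : X × X → ℝ be a symmetric conditionally negative definite kernel on a nonempty set X, and fix x_0 ∈ X. Then there exists a real inner product space H and a map f : X → H (given by f(x) = δ_x − δ_{x_0} in the GNS construction) such that for all x, y ∈ X: ‖f(x) − f(y)‖² = K(x,y) − ½K(x,x) − ½K(y,y). -/
/-- A kernel is conditionally negative definite if `∑ λᵢ λⱼ K(xᵢ,xⱼ) ≤ 0`
whenever `∑ λᵢ = 0`. -/
def IsCondNegDef {X : Type*} (K : X → X → ℝ) : Prop :=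
  ∀ (n : ℕ) (x : Fin n → X) (lam : Fin n → ℝ), (∑ j, lam j) = 0 →
    ∑ j, ∑ k, lam j * lam k * K (x j) (x k) ≤ 0

/-- A (bundled) real inner product space: a real vector space together with a
symmetric, bilinear, positive semidefinite form; `‖v‖²` is `inner v v`. -/
structure RealInnerSpace where
  carrier : Type
  [grp : AddCommGroup carrier]
  [mod : Module ℝ carrier]
  inner : carrier → carrier → ℝ
  symm : ∀ u v, inner u v = inner v u
  add_left : ∀ u v w, inner (u + v) w = inner u w + inner v w
  smul_left : ∀ (a : ℝ) (u v : carrier), inner (a • u) v = a * inner u v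
  nonneg : ∀ u, 0 ≤ inner u u

attribute [instance] RealInnerSpace.grp RealInnerSpace.mod


section GNS
variable {X : Type} (K : X → X → ℝ)

noncomputable def gnsB : (X →₀ ℝ) →ₗ[ℝ] (X →₀ ℝ) →ₗ[ℝ] ℝ :=
  Finsupp.lsum ℝ fun a => LinearMap.toSpanSingleton ℝ _
    (Finsupp.lsum ℝ fun b => (-(K a b / 2)) • (LinearMap.id : ℝ →ₗ[ℝ] ℝ))

lemma gnsB_apply (f g : X →₀ ℝ) :
    gnsB K f g = ∑ a ∈ f.support, ∑ b ∈ g.support, f a * (-(K a b / 2) * g b) := by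
  rw [gnsB, Finsupp.lsum_apply, Finsupp.sum, LinearMap.coe_sum, Finset.sum_apply]
  refine Finset.sum_congr rfl fun a _ => ?_
  rw [LinearMap.toSpanSingleton_apply, LinearMap.smul_apply, Finsupp.lsum_apply, Finsupp.sum,
    smul_eq_mul, Finset.mul_sum]
  refine Finset.sum_congr rfl fun b _ => ?_
  simp [mul_comm]

lemma gnsB_single (a b : X) :
    gnsB K (Finsupp.single a 1) (Finsupp.single b 1) = -(K a b / 2) := by
  rw [gnsB_apply, Finsupp.support_single_ne_zero _ one_ne_zero,
    Finsupp.support_single_ne_zero _ one_ne_zero]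
  simp

noncomputable def gnsS : (X →₀ ℝ) →ₗ[ℝ] ℝ := Finsupp.lsum ℝ fun _ => LinearMap.id

lemma gnsS_apply (f : X →₀ ℝ) : gnsS f = ∑ a ∈ f.support, f a := by
  rw [gnsS, Finsupp.lsum_apply, Finsupp.sum]; rfl


lemma gnsB_symm (hsymm : ∀ x y, K x y = K y x) (f g : X →₀ ℝ) :
    gnsB K f g = gnsB K g f := by
  rw [gnsB_apply, gnsB_apply, Finset.sum_comm]
  refine Finset.sum_congr rfl fun b _ => Finset.sum_congr rfl fun a _ => ?_
  rw [hsymm a b]; ring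

lemma gnsB_nonneg (hcnd : IsCondNegDef K) (h : X →₀ ℝ) (hh : gnsS h = 0) :
    0 ≤ gnsB K h h := by
  classical
  set s := h.support with hs
  set n := s.card
  set e : s ≃ Fin n := s.equivFin
  set x : Fin n → X := fun j => (e.symm j : X)
  set lam : Fin n → ℝ := fun j => h (x j)
  have hsum : (∑ j, lam j) = 0 := by
    have : (∑ j, lam j) = ∑ a : s, h a := Fintype.sum_equiv e.symm _ _ (fun j => rfl)
    rw [this, Finset.sum_coe_sort s (fun a => h a), ← gnsS_apply, hh]
  have key := hcnd n x lam hsum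
  have inner_eq : ∀ a : X, ∑ b ∈ s, h a * h b * K a b = ∑ k, h a * lam k * K a (x k) := by
    intro a
    rw [← Finset.sum_coe_sort s]
    exact Fintype.sum_equiv e (fun b : s => h a * h b * K a b) _
      (fun b => by simp [lam, x])
  have hdd : ∑ a ∈ s, ∑ b ∈ s, h a * h b * K a b
      = ∑ j, ∑ k, lam j * lam k * K (x j) (x k) := by
    rw [← Finset.sum_coe_sort s]
    refine Fintype.sum_equiv e _ _ (fun a => ?_)
    rw [inner_eq a]
    simp [lam, x]
  have : gnsB K h h = -(1/2) * ∑ a ∈ s, ∑ b ∈ s, h a * h b * K a b := by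
    rw [gnsB_apply, Finset.mul_sum]
    refine Finset.sum_congr rfl fun a _ => ?_
    rw [Finset.mul_sum]
    refine Finset.sum_congr rfl fun b _ => by ring
  rw [this, hdd]
  nlinarith [key]

noncomputable def gnsP (x₀ : X) : (X →₀ ℝ) →ₗ[ℝ] (X →₀ ℝ) :=
  LinearMap.id - (LinearMap.toSpanSingleton ℝ _ (Finsupp.single x₀ 1)).comp (gnsS)

lemma gnsS_gnsP (x₀ : X) (f : X →₀ ℝ) : gnsS (gnsP x₀ f) = 0 := by
  have h1 : gnsS (X := X) (Finsupp.single x₀ 1) = 1 := by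
    rw [gnsS_apply, Finsupp.support_single_ne_zero _ one_ne_zero]
    simp
  rw [gnsP, LinearMap.sub_apply, map_sub, LinearMap.id_apply, LinearMap.comp_apply,
    LinearMap.toSpanSingleton_apply, map_smul, h1, smul_eq_mul, mul_one, sub_self]

lemma gnsP_of_sum_zero (x₀ : X) (f : X →₀ ℝ) (hf : gnsS f = 0) : gnsP x₀ f = f := by
  simp [gnsP, LinearMap.sub_apply, hf]

end GNS

/-- GNS construction: for a symmetric conditionally negative definite kernel
`K` on a nonempty set `X` (with base point `x₀`), there is a real inner product space `H`
and a map `f : X → H` with `‖f x − f y‖² = K(x,y) − ½K(x,x) − ½K(y,y)` for all `x, y`. -/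
theorem exists_innerSpace_map_of_condNegDef {X : Type} (K : X → X → ℝ)
    (hsymm : ∀ x y, K x y = K y x) (hcnd : IsCondNegDef K) (x₀ : X) :
    ∃ (H : RealInnerSpace) (f : X → H.carrier),
      ∀ x y : X, H.inner (f x - f y) (f x - f y) = K x y - K x x / 2 - K y y / 2 := by
  classical
  refine ⟨⟨X →₀ ℝ, fun u v => gnsB K (gnsP x₀ u) (gnsP x₀ v),
    fun u v => gnsB_symm K hsymm _ _,
    fun u v w => by simp [map_add, LinearMap.add_apply],
    fun a u v => by simp [map_smul, LinearMap.smul_apply, smul_eq_mul],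
    fun u => gnsB_nonneg K hcnd _ (gnsS_gnsP x₀ _)⟩,
    fun x => Finsupp.single x 1 - Finsupp.single x₀ 1, fun x y => ?_⟩
  show gnsB K (gnsP x₀ _) (gnsP x₀ _) = _
  have h1 : ∀ a : X, gnsS (X := X) (Finsupp.single a 1) = 1 := by
    intro a
    rw [gnsS_apply, Finsupp.support_single_ne_zero _ one_ne_zero]
    simp
  have hd : (Finsupp.single x 1 - Finsupp.single x₀ 1)
      - (Finsupp.single y 1 - Finsupp.single x₀ (1 : ℝ))
      = Finsupp.single x 1 - Finsupp.single y 1 := by abel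
  have hz : gnsS (Finsupp.single x 1 - Finsupp.single y (1 : ℝ)) = 0 := by
    rw [map_sub, h1, h1, sub_self]
  rw [hd, gnsP_of_sum_zero x₀ _ hz]
  simp only [map_sub, LinearMap.sub_apply, gnsB_single]
  rw [hsymm y x]; ring
end

section
/- Let R be a countable equivalence relation on a probability space (Y, μ) that is μ-hyperfinite, witnessed by an increasing sequence of finite subequivalence relations. Then R is measurably amenable: the functions φ_n : Y → ℓ¹ defined by φ_n^x = (1/|[x]_{E_n}|)·χ_{[x]_{E_n}} are normalized (Σ_y φ_n^x(y) = 1) and for μ-almost every pair (x,y) ∈ R, ‖φ_n^x − φ_n^y‖_1 → 0 as n → ∞. -/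
open MeasureTheory

/-- `F` is a subequivalence relation of `R` with all classes finite. -/
def IsFiniteSubEquiv {Y : Type*} (R F : Y → Y → Prop) : Prop :=
  Equivalence F ∧ (∀ x y, F x y → R x y) ∧ ∀ x, {y | F x y}.Finite

/-- The uniform probability function on the `E n`-class of `x`:
`φ_n^x = (1/|[x]_{E n}|) · χ_{[x]_{E n}}`. -/
noncomputable def unifClass {Y : Type*} (E : ℕ → Y → Y → Prop) (n : ℕ) (x z : Y) : ℝ := by
  classical exact if E n x z then 1 / ({w | E n x w}.ncard : ℝ) else 0

/-- if `R` is `μ`-hyperfinite, witnessed by an increasing sequence `E n` of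
finite subequivalence relations whose union is `R` on a conull set `A`, then the uniform
functions `φ_n^x` on the `E n`-classes are normalized and, for (almost) every pair
`(x,y) ∈ R` (namely all pairs in `A × A`), `‖φ_n^x − φ_n^y‖₁ → 0`; hence `R` is
measurably amenable. -/
theorem muHyperfinite_implies_measurably_amenable
    {Y : Type*} [MeasurableSpace Y] (μ : Measure Y)
    (R : Y → Y → Prop) (hR : Equivalence R)
    (E : ℕ → Y → Y → Prop) (hE : ∀ n, IsFiniteSubEquiv R (E n))
    (hmono : ∀ n x y, E n x y → E (n + 1) x y)
    (A : Set Y) (hA : μ Aᶜ = 0)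
    (hunion : ∀ x ∈ A, ∀ y ∈ A, R x y → ∃ n, E n x y) :
    (∀ n x, ∑' z, unifClass E n x z = 1) ∧
    (∀ x ∈ A, ∀ y ∈ A, R x y →
      Filter.Tendsto (fun n => ∑' z, |unifClass E n x z - unifClass E n y z|)
        Filter.atTop (nhds 0)) := by
  classical
  constructor
  · intro n x
    obtain ⟨heq, -, hfin⟩ := hE n
    have hf := hfin x
    have hx : x ∈ hf.toFinset := by simp [heq.refl x]
    have hsum : ∑' z, unifClass E n x z = ∑ z ∈ hf.toFinset, unifClass E n x z := by
      refine tsum_eq_sum ?_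
      intro b hb
      have : ¬ E n x b := by simpa using hb
      simp [unifClass, this]
    rw [hsum]
    have hcard : ({w | E n x w}.ncard : ℝ) = (hf.toFinset.card : ℝ) := by
      rw [Set.ncard_eq_toFinset_card _ hf]
    have hval : ∀ z ∈ hf.toFinset, unifClass E n x z = 1 / (hf.toFinset.card : ℝ) := by
      intro z hz
      have : E n x z := by simpa using hz
      simp [unifClass, this, hcard]
    rw [Finset.sum_congr rfl hval, Finset.sum_const, nsmul_eq_mul]
    have hne : (hf.toFinset.card : ℝ) ≠ 0 := by
      have : 0 < hf.toFinset.card := Finset.card_pos.mpr ⟨x, hx⟩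
      exact_mod_cast this.ne'
    field_simp
  · intro x hx y hy hRxy
    obtain ⟨n, hn⟩ := hunion x hx y hy hRxy
    have hmono' : ∀ m, n ≤ m → E m x y := by
      intro m hm
      induction m with
      | zero => simpa [Nat.le_zero.mp hm] using hn
      | succ k ih =>
        rcases Nat.lt_or_ge n (k+1) with h | h
        · exact hmono k x y (ih (Nat.lt_succ_iff.mp h))
        · have : n = k+1 := le_antisymm hm h
          simpa [this] using hn
    refine tendsto_atTop_of_eventually_const (i₀ := n) ?_
    intro m hm
    obtain ⟨heq, -, -⟩ := hE m
    have hclass : {w | E m x w} = {w | E m y w} := by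
      ext w
      exact ⟨fun h => heq.trans (heq.symm (hmono' m hm)) h,
        fun h => heq.trans (hmono' m hm) h⟩
    have hfun : ∀ z, unifClass E m x z = unifClass E m y z := by
      intro z
      have hiff : E m x z ↔ E m y z := by
        constructor
        · exact fun h => heq.trans (heq.symm (hmono' m hm)) h
        · exact fun h => heq.trans (hmono' m hm) h
      simp only [unifClass, hclass]
      by_cases h : E m y z <;> simp [h, hiff.mpr, hiff.mp, hiff]
    simp [hfun]
end

section
/- (Kaiser's removing points method) Let X be a finite graph of bounded degree having property A witnessed for parameters ε and S by a map ξ : X → ℓ¹(X) with ‖ξ_x‖₁ = 1, supp(ξ_x) ⊆ B_S(x), and ‖ξ_x − ξ_y‖₁ < ε for adjacent x, y. Then for any proper subgraph W ⊂ X there exists ξ' : X\W → ℓ¹(X\W) with ‖ξ'_x‖₁ = 1, supp(ξ'_x) ⊆ B_M(x) for M = max_{y∈X} |B_S(y)|, and ‖ξ'_x − ξ'_y‖₁ < ε for x, y adjacent in X\W. -/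
/-- Kaiser's removing points method: if a finite bounded degree graph `X`
has property A for parameters `ε` and `S`, witnessed by `ξ`, then for every proper
subgraph `W ⊂ X` there is a witness `ξ'` on `X \ W` for the parameters `ε` and
`M = max_{y ∈ X} |B_S(y)|`. -/
theorem kaiser_removing_points
    {V : Type*} [Fintype V] [DecidableEq V] (G : SimpleGraph V) [DecidableRel G.Adj]
    (ε : ℝ) (hε : 0 < ε) (S : ℕ) (ξ : V → V → ℝ)
    (hnorm : ∀ x, ∑ y, |ξ x y| = 1)
    (hsupp : ∀ x y, ξ x y ≠ 0 → G.Reachable x y ∧ G.dist x y ≤ S)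
    (hedge : ∀ x y, G.Adj x y → ∑ z, |ξ x z - ξ y z| < ε)
    (W : Finset V) (hW : W ≠ Finset.univ) :
    ∃ ξ' : {v // v ∉ W} → {v // v ∉ W} → ℝ,
      (∀ x, ∑ y, |ξ' x y| = 1) ∧
      (∀ x y : {v // v ∉ W}, ξ' x y ≠ 0 → G.Reachable ↑x ↑y ∧
        G.dist ↑x ↑y ≤
          Finset.univ.sup fun v : V => {z : V | G.Reachable v z ∧ G.dist v z ≤ S}.ncard) ∧
      (∀ x y : {v // v ∉ W}, G.Adj ↑x ↑y → ∑ z, |ξ' x z - ξ' y z| < ε) := by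
  classical
  -- a point outside W
  have hv₀ : ∃ v : V, v ∉ W := by
    by_contra h
    push_neg at h
    exact hW (Finset.eq_univ_iff_forall.2 h)
  obtain ⟨v₀, hv₀⟩ := hv₀
  -- nearest-point retraction to the complement of W
  have hr : ∀ z : V, ∃ y : {v // v ∉ W}, ∀ x : V, x ∉ W → G.Reachable z x →
      G.Reachable z ↑y ∧ G.dist z ↑y ≤ G.dist z x := by
    intro z
    by_cases hc : (Finset.univ.filter fun v => v ∉ W ∧ G.Reachable z v).Nonempty
    · obtain ⟨y, hy, hmin⟩ := Finset.exists_min_image _ (fun v => G.dist z v) hc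
      simp only [Finset.mem_filter, Finset.mem_univ, true_and] at hy
      exact ⟨⟨y, hy.1⟩, fun x hx hrx => ⟨hy.2, hmin x (by simp [hx, hrx])⟩⟩
    · exact ⟨⟨v₀, hv₀⟩, fun x hx hrx =>
        absurd ⟨x, by simp [hx, hrx]⟩ hc⟩
  choose r hrprop using hr
  refine ⟨fun x y => ∑ z ∈ Finset.univ.filter (fun z => r z = y), |ξ (↑x) z|,
    ?_, ?_, ?_⟩
  · -- norm
    intro x
    dsimp only
    have h1 : ∀ y : {v // v ∉ W},
        abs (∑ z ∈ Finset.univ.filter (fun z => r z = y), |ξ (↑x) z|)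
          = ∑ z ∈ Finset.univ.filter (fun z => r z = y), |ξ (↑x) z| :=
      fun y => abs_of_nonneg (Finset.sum_nonneg fun z _ => abs_nonneg _)
    simp only [h1]
    rw [Finset.sum_fiberwise_of_maps_to (fun z _ => Finset.mem_univ (r z))]
    exact hnorm _
  · -- support
    intro x y h
    dsimp only at h
    obtain ⟨z, hz, hzne⟩ := Finset.exists_ne_zero_of_sum_ne_zero h
    simp only [Finset.mem_filter, Finset.mem_univ, true_and] at hz
    have hξ : ξ (↑x) z ≠ 0 := fun h0 => hzne (by simp [h0])
    obtain ⟨hreach, hdist⟩ := hsupp (↑x) z hξ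
    obtain ⟨hry, hrd⟩ := hrprop z (↑x) x.2 hreach.symm
    rw [hz] at hry hrd
    have hdzx : G.dist z ↑x ≤ S := by rwa [SimpleGraph.dist_comm]
    have hdzy : G.dist z ↑y ≤ S := le_trans hrd hdzx
    refine ⟨hreach.trans hry, ?_⟩
    -- build a walk from x to y through z
    obtain ⟨p, hp⟩ := hreach.exists_walk_length_eq_dist
    obtain ⟨q, hq⟩ := hry.exists_walk_length_eq_dist
    set w : G.Walk (↑x) (↑y) := p.append q with hw
    -- all support vertices of w are in the ball B_S(z)
    have hball : ∀ u ∈ w.support, G.Reachable z u ∧ G.dist z u ≤ S := by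
      intro u hu
      rw [hw, SimpleGraph.Walk.mem_support_append_iff] at hu
      rcases hu with hu | hu
      · refine ⟨(SimpleGraph.Walk.reachable (p.dropUntil u hu)).symm, ?_⟩
        rw [SimpleGraph.dist_comm]
        calc G.dist u z ≤ (p.dropUntil u hu).length := SimpleGraph.dist_le _
          _ ≤ p.length := SimpleGraph.Walk.length_dropUntil_le p hu
          _ = G.dist (↑x) z := hp
          _ ≤ S := hdist
      · refine ⟨SimpleGraph.Walk.reachable (q.takeUntil u hu), ?_⟩
        calc G.dist z u ≤ (q.takeUntil u hu).length := SimpleGraph.dist_le _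
          _ ≤ q.length := SimpleGraph.Walk.length_takeUntil_le q hu
          _ = G.dist z ↑y := hq
          _ ≤ S := hdzy
    -- count: dist x y + 1 ≤ card of support of w
    have hb := w.bypass
    have hcard1 : G.dist (↑x) (↑y) + 1 ≤ w.support.toFinset.card := by
      have hsub : w.bypass.support.toFinset ⊆ w.support.toFinset := by
        intro u hu
        rw [List.mem_toFinset] at hu ⊢
        exact SimpleGraph.Walk.support_bypass_subset w hu
      have hnodup : w.bypass.support.Nodup := w.bypass_isPath.support_nodup
      have hbcard : w.bypass.support.toFinset.card = w.bypass.length + 1 := by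
        rw [List.toFinset_card_of_nodup hnodup, SimpleGraph.Walk.length_support]
      calc G.dist (↑x) (↑y) + 1 ≤ w.bypass.length + 1 :=
            Nat.add_le_add_right (SimpleGraph.dist_le w.bypass) 1
        _ = w.bypass.support.toFinset.card := hbcard.symm
        _ ≤ w.support.toFinset.card := Finset.card_le_card hsub
    -- support finset is contained in the ball
    have hcard2 : w.support.toFinset.card ≤
        {u : V | G.Reachable z u ∧ G.dist z u ≤ S}.ncard := by
      have hsub : (↑w.support.toFinset : Set V) ⊆
          {u : V | G.Reachable z u ∧ G.dist z u ≤ S} := by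
        intro u hu
        simp only [Finset.coe_sort_coe, Finset.mem_coe, List.mem_toFinset] at hu
        exact hball u hu
      calc w.support.toFinset.card
          = (↑w.support.toFinset : Set V).ncard := (Set.ncard_coe_finset _).symm
        _ ≤ _ := Set.ncard_le_ncard hsub (Set.toFinite _)
    have hcard3 : {u : V | G.Reachable z u ∧ G.dist z u ≤ S}.ncard ≤
        Finset.univ.sup fun v : V => {u : V | G.Reachable v u ∧ G.dist v u ≤ S}.ncard :=
      Finset.le_sup (f := fun v : V => {u : V | G.Reachable v u ∧ G.dist v u ≤ S}.ncard) (Finset.mem_univ z)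
    omega
  · -- edge condition
    intro x y hxy
    dsimp only
    have key : ∀ y' : {v // v ∉ W},
        abs ((∑ z ∈ Finset.univ.filter (fun z => r z = y'), |ξ (↑x) z|) -
          ∑ z ∈ Finset.univ.filter (fun z => r z = y'), |ξ (↑y) z|)
        ≤ ∑ z ∈ Finset.univ.filter (fun z => r z = y'), |ξ (↑x) z - ξ (↑y) z| := by
      intro y'
      rw [← Finset.sum_sub_distrib]
      refine le_trans (Finset.abs_sum_le_sum_abs _ _) ?_
      exact Finset.sum_le_sum fun z _ => abs_abs_sub_abs_le_abs_sub _ _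
    calc ∑ y' : {v // v ∉ W},
          abs ((∑ z ∈ Finset.univ.filter (fun z => r z = y'), |ξ (↑x) z|) -
            ∑ z ∈ Finset.univ.filter (fun z => r z = y'), |ξ (↑y) z|)
        ≤ ∑ y' : {v // v ∉ W},
            ∑ z ∈ Finset.univ.filter (fun z => r z = y'), |ξ (↑x) z - ξ (↑y) z| :=
          Finset.sum_le_sum fun y' _ => key y'
      _ = ∑ z, |ξ (↑x) z - ξ (↑y) z| :=
          Finset.sum_fiberwise_of_maps_to (fun z _ => Finset.mem_univ (r z)) _
      _ < ε := hedge _ _ hxy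
end

section
/- Let {(X_i, B_i, μ_i)} be a sequence of probability spaces, ω a non-principal ultrafilter on ℕ, and let θ_ω be the outer measure on the ultraproduct ∏_{i→ω} X_i defined by θ_ω(A) = inf{ Σ_n lim_{i→ω} μ_i(B_i^n) : A ⊆ ⋃_n [B_i^n]_ω, B_i^n ∈ B_i }. Then for every sequence of measurable sets B_i ∈ B_i, the ultraproduct set [B_i]_ω is θ_ω-measurable (Carathéodory measurable) and θ_ω([B_i]_ω) = lim_{i→ω} μ_i(B_i). -/
/-!
The upper bound `θ_ω([B_i]_ω) ≤ lim_ω μ_i(B_i)` comes from covering `[B_i]_ω` by itself.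
For the lower bound, ultraproducts over a non-principal ultrafilter on `ℕ` are countably
saturated, so a countable cover of `[A_i]_ω` by sets `[B_i^n]_ω` already covers it with
finitely many `B_i^n` for `ω`-almost every `i`; finite subadditivity of each `μ_i` then
passes to the ultralimit.
For measurability, split every covering set `[D_i^n]_ω` into `[D_i^n ∩ B_i]_ω` and
`[D_i^n \ B_i]_ω`: their costs add up to that of `[D_i^n]_ω` because ultralimits are additive.
Along an ultrafilter into `ℝ≥0∞`, `limsup` is the ultralimit.
-/

open Filter MeasureTheory
open scoped ENNReal

/-- The setoid on `∀ i, X i` identifying sequences that agree `ω`-almost everywhere. -/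
def ultraSetoid (ω : Ultrafilter ℕ) (X : ℕ → Type*) : Setoid (∀ i, X i) where
  r x y := {i | x i = y i} ∈ ω
  iseqv := by
    refine ⟨fun x => ?_, fun {x y} h => ?_, fun {x y z} hxy hyz => ?_⟩
    · have : {i | x i = x i} = Set.univ := by ext i; simp
      rw [this]; exact Filter.univ_mem
    · simpa only [eq_comm] using h
    · exact Filter.mem_of_superset (Filter.inter_mem hxy hyz)
        fun i hi => hi.1.trans hi.2

/-- The (set-theoretic) ultraproduct `∏_{i→ω} X i`. -/
def Ultraprod (ω : Ultrafilter ℕ) (X : ℕ → Type*) := Quotient (ultraSetoid ω X)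

/-- The subset `[B i]_ω` of the ultraproduct determined by a sequence of sets `B i ⊆ X i`:
classes of sequences lying in `B i` for `ω`-almost every `i`. -/
def classSet {X : ℕ → Type*} (ω : Ultrafilter ℕ) (B : ∀ i, Set (X i)) :
    Set (Ultraprod ω X) :=
  {q | ∃ x : ∀ i, X i, Quotient.mk (ultraSetoid ω X) x = q ∧ {i | x i ∈ B i} ∈ ω}

/-- The outer measure `θ_ω` on the ultraproduct: infimum of `∑_n lim_ω μ i (B n i)` over
countable covers of `A` by ultraproducts of measurable sets. -/
noncomputable def thetaOmega {X : ℕ → Type*} (ω : Ultrafilter ℕ)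
    [∀ i, MeasurableSpace (X i)] (μ : ∀ i, Measure (X i))
    (A : Set (Ultraprod ω X)) : ℝ≥0∞ :=
  ⨅ (B : ℕ → ∀ i, Set (X i)) (_ : ∀ n i, MeasurableSet (B n i))
    (_ : A ⊆ ⋃ n, classSet ω (B n)),
    ∑' n, limsup (fun i => μ i (B n i)) (ω : Filter ℕ)

open scoped Topology

section UltrafilterLimit

variable {ι α β : Type*} [ConditionallyCompleteLinearOrder α] [TopologicalSpace α]
  [OrderTopology α] [CompactSpace α]

theorem Ultrafilter.tendsto_limsup (ω : Ultrafilter β) (f : β → α) :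
    Tendsto f ω (𝓝 (limsup f ω)) := by
  have h : Tendsto f ω (𝓝 (ω.map f).lim) := by
    rw [Tendsto, ← Ultrafilter.coe_map]
    exact (ω.map f).le_nhds_lim
  rwa [h.limsup_eq]

variable [AddCommMonoid α] [ContinuousAdd α]

theorem Ultrafilter.limsup_add (ω : Ultrafilter β) (f g : β → α) :
    limsup (fun b => f b + g b) ω = limsup f ω + limsup g ω :=
  ((ω.tendsto_limsup f).add (ω.tendsto_limsup g)).limsup_eq

theorem Ultrafilter.limsup_finset_sum (ω : Ultrafilter β) (s : Finset ι) (f : ι → β → α) :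
    limsup (fun b => ∑ n ∈ s, f n b) ω = ∑ n ∈ s, limsup (f n) ω :=
  (tendsto_finsetSum s fun n _ => ω.tendsto_limsup (f n)).limsup_eq

end UltrafilterLimit

section ClassSet

variable {X : ℕ → Type*} {ω : Ultrafilter ℕ}

def Ultraprod.mk (ω : Ultrafilter ℕ) (x : ∀ i, X i) : Ultraprod ω X :=
  Quotient.mk (ultraSetoid ω X) x

theorem Ultraprod.ind {p : Ultraprod ω X → Prop} (h : ∀ x, p (Ultraprod.mk ω x))
    (q : Ultraprod ω X) : p q :=
  Quotient.ind h q

@[simp]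
theorem mk_mem_classSet {B : ∀ i, Set (X i)} {x : ∀ i, X i} :
    Ultraprod.mk ω x ∈ classSet ω B ↔ ∀ᶠ i in ω, x i ∈ B i := by
  refine ⟨fun ⟨y, hyx, hy⟩ => ?_, fun h => ⟨x, rfl, h⟩⟩
  filter_upwards [Quotient.exact hyx, hy] with i hi hyi
  exact hi ▸ hyi

theorem classSet_inter (B C : ∀ i, Set (X i)) :
    classSet ω (fun i => B i ∩ C i) = classSet ω B ∩ classSet ω C :=
  Set.ext <| Ultraprod.ind fun x => by
    simp only [Set.mem_inter_iff, mk_mem_classSet, eventually_and]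

theorem classSet_compl (B : ∀ i, Set (X i)) :
    classSet ω (fun i => (B i)ᶜ) = (classSet ω B)ᶜ :=
  Set.ext <| Ultraprod.ind fun x => by
    simp only [Set.mem_compl_iff, mk_mem_classSet, ← Ultrafilter.eventually_not]

theorem inter_classSet_subset_iUnion {A : Set (Ultraprod ω X)} {D : ℕ → ∀ i, Set (X i)}
    (hA : A ⊆ ⋃ n, classSet ω (D n)) (E : ∀ i, Set (X i)) :
    A ∩ classSet ω E ⊆ ⋃ n, classSet ω (fun i => D n i ∩ E i) := by
  simp_rw [classSet_inter, ← Set.iUnion_inter]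
  exact Set.inter_subset_inter_left _ hA

/-- Countable saturation of ultraproducts along a non-principal ultrafilter on `ℕ`. -/
theorem exists_forall_eventually_mem_of_antitone [∀ i, Nonempty (X i)]
    (hω : (ω : Filter ℕ) ≤ cofinite) (C : ℕ → ∀ i, Set (X i))
    (hC : ∀ i, Antitone fun N => C N i) (hne : ∀ N, ∀ᶠ i in ω, (C N i).Nonempty) :
    ∃ x : ∀ i, X i, ∀ N, ∀ᶠ i in ω, x i ∈ C N i := by
  classical
  -- at coordinate `i`, pick a point of the deepest nonempty `C N i` with `N ≤ i`
  let depth i := Nat.findGreatest (fun N => (C N i).Nonempty) i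
  let x : ∀ i, X i := fun i =>
    if h : (C (depth i) i).Nonempty then h.some else Classical.arbitrary _
  refine ⟨x, fun N => ?_⟩
  have hlarge : ∀ᶠ i in ω, N ≤ i :=
    hω <| by simpa [Set.compl_ofPred] using Set.finite_lt_nat N
  filter_upwards [hne N, hlarge] with i hi hNi
  have hdepth : (C (depth i) i).Nonempty :=
    Nat.findGreatest_spec (P := fun N => (C N i).Nonempty) hNi hi
  have hx : x i ∈ C (depth i) i := by simp only [x, dif_pos hdepth]; exact hdepth.some_mem
  exact hC i (Nat.le_findGreatest hNi hi) hx

theorem exists_eventually_subset_biUnion_range [∀ i, Nonempty (X i)]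
    (hω : (ω : Filter ℕ) ≤ cofinite) {A : ∀ i, Set (X i)} {D : ℕ → ∀ i, Set (X i)}
    (hA : classSet ω A ⊆ ⋃ n, classSet ω (D n)) :
    ∃ N, ∀ᶠ i in ω, A i ⊆ ⋃ n ∈ Finset.range N, D n i := by
  by_contra! hcover
  let C N i := A i \ ⋃ n ∈ Finset.range N, D n i
  have hanti : ∀ i, Antitone fun N => C N i := fun i M N hMN =>
    Set.sdiff_subset_sdiff_right <| Set.biUnion_subset_biUnion_left <| by simpa using hMN
  have hne : ∀ N, ∀ᶠ i in ω, (C N i).Nonempty := fun N =>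
    (hcover N).mono fun i hi => Set.sdiff_nonempty.2 hi
  obtain ⟨x, hx⟩ := exists_forall_eventually_mem_of_antitone hω C hanti hne
  have hxA : Ultraprod.mk ω x ∈ classSet ω A :=
    mk_mem_classSet.2 <| (hx 0).mono fun i hi => hi.1
  obtain ⟨n, hn⟩ := Set.mem_iUnion.1 (hA hxA)
  obtain ⟨i, hD, hC⟩ := ((mk_mem_classSet.1 hn).and (hx (n + 1))).exists
  exact hC.2 (Set.mem_biUnion (Finset.self_mem_range_succ n) hD)

end ClassSet

section ThetaOmega

variable {X : ℕ → Type*} [∀ i, MeasurableSpace (X i)] {ω : Ultrafilter ℕ}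
  {μ : ∀ i, Measure (X i)}

theorem thetaOmega_le_tsum {A : Set (Ultraprod ω X)} {D : ℕ → ∀ i, Set (X i)}
    (hD : ∀ n i, MeasurableSet (D n i)) (hA : A ⊆ ⋃ n, classSet ω (D n)) :
    thetaOmega ω μ A ≤ ∑' n, limsup (fun i => μ i (D n i)) ω :=
  iInf₂_le_of_le D hD (iInf_le _ hA)

theorem le_thetaOmega {A : Set (Ultraprod ω X)} {a : ℝ≥0∞}
    (h : ∀ D : ℕ → ∀ i, Set (X i), (∀ n i, MeasurableSet (D n i)) →
      A ⊆ ⋃ n, classSet ω (D n) → a ≤ ∑' n, limsup (fun i => μ i (D n i)) ω) :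
    a ≤ thetaOmega ω μ A :=
  le_iInf₂ fun D hD => le_iInf (h D hD)

theorem thetaOmega_classSet_le {B : ∀ i, Set (X i)} (hB : ∀ i, MeasurableSet (B i)) :
    thetaOmega ω μ (classSet ω B) ≤ limsup (fun i => μ i (B i)) ω := by
  classical
  let D : ℕ → ∀ i, Set (X i) := fun n i => if n = 0 then B i else ∅
  have hD : ∀ n i, MeasurableSet (D n i) := fun n i => by
    by_cases hn : n = 0 <;> simp [D, hn, hB i]
  calc thetaOmega ω μ (classSet ω B)
      ≤ ∑' n, limsup (fun i => μ i (D n i)) ω :=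
        thetaOmega_le_tsum hD (Set.subset_iUnion_of_subset 0 (by simp [D]))
    _ = limsup (fun i => μ i (B i)) ω := by
        rw [tsum_eq_single 0 fun n hn => by simp [D, hn]]
        simp [D]

theorem limsup_le_thetaOmega_classSet [∀ i, Nonempty (X i)] (hω : (ω : Filter ℕ) ≤ cofinite)
    (A : ∀ i, Set (X i)) :
    limsup (fun i => μ i (A i)) ω ≤ thetaOmega ω μ (classSet ω A) := by
  refine le_thetaOmega fun D _ hA => ?_
  obtain ⟨N, hN⟩ := exists_eventually_subset_biUnion_range hω hA
  calc limsup (fun i => μ i (A i)) ω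
      ≤ limsup (fun i => ∑ n ∈ Finset.range N, μ i (D n i)) ω :=
        limsup_le_limsup <| hN.mono fun i hi =>
          (measure_mono hi).trans (measure_biUnion_finset_le _ _)
    _ = ∑ n ∈ Finset.range N, limsup (fun i => μ i (D n i)) ω := ω.limsup_finset_sum _ _
    _ ≤ ∑' n, limsup (fun i => μ i (D n i)) ω := ENNReal.sum_le_tsum _

theorem thetaOmega_inter_add_inter_compl_le {B : ∀ i, Set (X i)}
    (hB : ∀ i, MeasurableSet (B i)) (C : Set (Ultraprod ω X)) :
    thetaOmega ω μ (C ∩ classSet ω B) + thetaOmega ω μ (C ∩ (classSet ω B)ᶜ) ≤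
      thetaOmega ω μ C := by
  refine le_thetaOmega fun D hD hC => ?_
  have hin : thetaOmega ω μ (C ∩ classSet ω B) ≤
      ∑' n, limsup (fun i => μ i (D n i ∩ B i)) ω :=
    thetaOmega_le_tsum (fun n i => (hD n i).inter (hB i)) (inter_classSet_subset_iUnion hC B)
  have hout : thetaOmega ω μ (C ∩ (classSet ω B)ᶜ) ≤
      ∑' n, limsup (fun i => μ i (D n i \ B i)) ω := by
    rw [← classSet_compl]
    exact thetaOmega_le_tsum (fun n i => (hD n i).diff (hB i)) (inter_classSet_subset_iUnion hC _)
  calc _ ≤ _ := add_le_add hin hout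
    _ = ∑' n, limsup (fun i => μ i (D n i ∩ B i) + μ i (D n i \ B i)) ω := by
        rw [← ENNReal.tsum_add]
        simp only [ω.limsup_add]
    _ = ∑' n, limsup (fun i => μ i (D n i)) ω := by
        simp only [measure_inter_add_sdiff _ (hB _)]

end ThetaOmega

/-- for every sequence of measurable sets `B i`, the ultraproduct set
`[B i]_ω` is Carathéodory measurable for the outer measure `θ_ω`, and
`θ_ω([B i]_ω) = lim_ω μ i (B i)`. -/
theorem classSet_caratheodory_and_measure
    {X : ℕ → Type*} [∀ i, MeasurableSpace (X i)] (μ : ∀ i, Measure (X i))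
    [∀ i, IsProbabilityMeasure (μ i)]
    (ω : Ultrafilter ℕ) (hω : (ω : Filter ℕ) ≤ cofinite)
    (B : ∀ i, Set (X i)) (hB : ∀ i, MeasurableSet (B i)) :
    (∀ C : Set (Ultraprod ω X),
      thetaOmega ω μ (C ∩ classSet ω B) + thetaOmega ω μ (C ∩ (classSet ω B)ᶜ) ≤
        thetaOmega ω μ C) ∧
    thetaOmega ω μ (classSet ω B) = limsup (fun i => μ i (B i)) (ω : Filter ℕ) := by
  have : ∀ i, Nonempty (X i) := fun i => (μ i).nonempty_of_neZero
  exact ⟨thetaOmega_inter_add_inter_compl_le hB,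
    (thetaOmega_classSet_le hB).antisymm (limsup_le_thetaOmega_classSet hω B)⟩
end
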